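/- arXiv:1312.5978 — 4 statements merged into one kernel-verified Lean document; each statement's English description precedes it below -/
import Mathlib

section
/- Let F be a field and let Q_1, …, Q_n ∈ F[x_1,…,x_N] be homogeneous polynomials with Σ_{i=1}^n deg(Q_i) = n such that every monomial appearing in any Q_i has support at most s, and set Q = Π_{i=1}^n Q_i. Then for all positive integers r ≤ n, ℓ, m satisfying m + rs ≤ N/2 and m + rs ≤ ℓ/2: Dim(⟨∂^r Q⟩_{(ℓ,m)}) ≤ (n−r+1)·(rs+1)·C(n+r, r)·C(N, m+rs)·C(ℓ+n−r−1, m+rs−1), where C(a,b) denotes the binomial coefficient. -/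
open MvPolynomial

/-- Iterated partial derivative along a list of variables. -/
noncomputable def derivList {σ F : Type*} [CommSemiring F]
    (L : List σ) (P : MvPolynomial σ F) : MvPolynomial σ F :=
  L.foldr (fun x Q => MvPolynomial.pderiv x Q) P

/-- The partial derivative `∂_γ P` with respect to the monomial with exponent vector `γ`
(first-order partial derivatives iterated according to the exponent vector). -/
noncomputable def derivMon {σ F : Type*} [CommSemiring F]
    (γ : σ →₀ ℕ) (P : MvPolynomial σ F) : MvPolynomial σ F :=
  derivList (Finsupp.toMultiset γ).toList P

/-- The degree of a monomial given by its exponent vector. -/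
def monDeg {σ : Type*} (e : σ →₀ ℕ) : ℕ := e.sum fun _ c => c

/-- The space `⟨∂^r P⟩_{(ℓ,m)}` of support-`m` degree-`ℓ` shifted partial derivatives of
order `r` of `P`: the span of all `x^e · ∂_γ P` with `deg x^e = ℓ`, `supp x^e = m`,
`deg γ = r`. -/
noncomputable def shiftedSpan {σ F : Type*} [CommSemiring F]
    (r ℓ m : ℕ) (P : MvPolynomial σ F) : Submodule F (MvPolynomial σ F) :=
  Submodule.span F { Q | ∃ e γ : σ →₀ ℕ, monDeg e = ℓ ∧ e.support.card = m ∧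
    monDeg γ = r ∧ Q = MvPolynomial.monomial e (1 : F) * derivMon γ P }

/-!
By the Leibniz rule, every derivative `∂_γ Q` with `deg γ = r` is a combination of terms
`u · ∏_{i ∉ S} Q_i`, where `S` (with `|S| ≤ r`) collects the factors that were differentiated and
`u` is homogeneous of degree `∑_{i ∈ S} deg Q_i - r` with monomials of support at most `|S| s`.
Multiplying by `x^e` (degree `ℓ`, support `m`) and expanding `u` into monomials, the shifted space
is spanned by the products `x^w · ∏_{i ∉ S} Q_i` with `deg w = ℓ + ∑_{i ∈ S} deg Q_i - r` and
`m ≤ |supp w| ≤ m + rs`. There are at most `∑_{k ≤ r} C(n, k) ≤ C(n + r, r)` sets `S`, and by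
stars and bars at most `C(N, j) C(deg w - 1, j - 1)` monomials `x^w` of support `j`; the
hypotheses `2(m + rs) ≤ N, ℓ` put `j ≤ m + rs` in the range where both binomials increase in `j`.
-/

open Finset

namespace MvPolynomial

variable {σ R : Type*} [CommSemiring R]

def MonomialSupportLE (p : MvPolynomial σ R) (t : ℕ) : Prop :=
  ∀ v ∈ p.support, #(Finsupp.support v) ≤ t

namespace MonomialSupportLE

variable {p q : MvPolynomial σ R} {t t' : ℕ}

lemma one : (1 : MvPolynomial σ R).MonomialSupportLE 0 := by
  classical
  intro v hv
  obtain rfl : v = 0 := by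
    by_contra h
    exact (mem_support_iff.1 hv) (by simp [coeff_one, Ne.symm h])
  simp

lemma pderiv (h : p.MonomialSupportLE t) (i : σ) : (pderiv i p).MonomialSupportLE t := by
  classical
  intro v hv
  rw [mem_support_iff, coeff_pderiv] at hv
  exact (card_le_card (Finsupp.support_mono le_self_add)).trans
    (h _ (mem_support_iff.2 (left_ne_zero_of_mul hv)))

lemma mul (hp : p.MonomialSupportLE t) (hq : q.MonomialSupportLE t') :
    (p * q).MonomialSupportLE (t + t') := by
  classical
  intro v hv
  obtain ⟨a, ha, b, hb, rfl⟩ := mem_add.1 (support_mul p q hv)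
  exact (card_le_card Finsupp.support_add).trans
    ((card_union_le _ _).trans (add_le_add (hp a ha) (hq b hb)))

end MonomialSupportLE

lemma IsHomogeneous.pderiv_eq_zero {φ : MvPolynomial σ R} (h : φ.IsHomogeneous 0) (i : σ) :
    pderiv i φ = 0 := by
  rw [← totalDegree_zero_iff_isHomogeneous, totalDegree_eq_zero_iff_eq_C] at h
  rw [h, pderiv_C]

end MvPolynomial

lemma Derivation.leibniz_finset_prod {R A M ι : Type*} [CommSemiring R] [CommSemiring A]
    [Algebra R A] [AddCommMonoid M] [Module A M] [Module R M] (D : Derivation R A M)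
    [DecidableEq ι] (s : Finset ι) (f : ι → A) :
    D (∏ i ∈ s, f i) = ∑ j ∈ s, (∏ i ∈ s.erase j, f i) • D (f j) := by
  induction s using Finset.induction_on with
  | empty => simp
  | insert a s ha ih =>
    rw [prod_insert ha, D.leibniz, ih, sum_insert ha, erase_insert ha, smul_sum, add_comm]
    congr 1
    refine sum_congr rfl fun j hj => ?_
    rw [erase_insert_of_ne (ne_of_mem_of_not_mem hj ha).symm,
      prod_insert (fun h => ha (mem_of_mem_erase h)), mul_smul]

lemma Finsupp.card_support_le_degree {σ : Type*} (w : σ →₀ ℕ) : #w.support ≤ w.degree := by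
  rw [card_eq_sum_ones, degree_apply]
  exact Finset.sum_le_sum fun i hi => Nat.one_le_iff_ne_zero.2 (mem_support_iff.1 hi)

lemma monDeg_eq_degree {σ : Type*} (e : σ →₀ ℕ) : monDeg e = e.degree := rfl

namespace Nat

theorem choose_le_choose_of_le_of_two_mul_le {n a b : ℕ} (hab : a ≤ b) (hb : 2 * b ≤ n) :
    n.choose a ≤ n.choose b := by
  induction b, hab using Nat.le_induction with
  | base => rfl
  | succ b _ ih => exact (ih (by omega)).trans (choose_le_succ_of_lt_half_left (by omega))

theorem sum_range_choose_le_add_choose (n r : ℕ) :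
    ∑ k ∈ range (r + 1), n.choose k ≤ (n + r).choose r := by
  rw [add_choose_eq, Finset.Nat.sum_antidiagonal_eq_sum_range_succ_mk]
  exact sum_le_sum fun k hk => Nat.le_mul_of_pos_right _ (choose_pos (by simp at hk; omega))

theorem choose_sub_le_choose_sub_one {D j : ℕ} (hjD : j ≤ D) :
    (D - 1).choose (D - j) ≤ (D - 1).choose (j - 1) := by
  rcases Nat.eq_zero_or_pos j with rfl | hj
  · rcases D with _ | D <;> simp
  · exact (choose_symm_of_eq_add (by omega)).le

end Nat

section ProductDerivatives

open MvPolynomial Submodule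

variable {ι σ R : Type*} [Fintype ι] [DecidableEq ι] [CommSemiring R]
  (Q : ι → MvPolynomial σ R) (deg : ι → ℕ) (s : ℕ)

/-- The terms of `∂_γ (∏ i, Q i)` for `deg γ = k`: the factors indexed by `S` have been
differentiated and absorbed into `u`. -/
def derivTerms (k : ℕ) : Set (MvPolynomial σ R) :=
  {P | ∃ (S : Finset ι) (u : MvPolynomial σ R) (d : ℕ), #S ≤ k ∧ d + k = ∑ i ∈ S, deg i ∧
    u.IsHomogeneous d ∧ u.MonomialSupportLE (#S * s) ∧ P = u * ∏ i ∈ Sᶜ, Q i}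

def shiftedTerms (r ℓ m : ℕ) : Set (MvPolynomial σ R) :=
  {P | ∃ (S : Finset ι) (w : σ →₀ ℕ), #S ≤ r ∧ w.degree + r = ℓ + ∑ i ∈ S, deg i ∧
    m ≤ #w.support ∧ #w.support ≤ m + r * s ∧ P = monomial w 1 * ∏ i ∈ Sᶜ, Q i}

lemma prod_mem_derivTerms_zero : ∏ i, Q i ∈ derivTerms Q deg s 0 :=
  ⟨∅, 1, 0, by simp, by simp, isHomogeneous_one _ _, by simpa using MonomialSupportLE.one,
    by simp⟩

lemma monomial_mul_mem_span_shiftedTerms {r : ℕ} {P : MvPolynomial σ R}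
    (hP : P ∈ derivTerms Q deg s r) (e : σ →₀ ℕ) :
    monomial e 1 * P ∈ span R (shiftedTerms Q deg s r e.degree #e.support) := by
  classical
  obtain ⟨S, u, d, hSr, hd, hu, hus, rfl⟩ := hP
  rw [u.as_sum, sum_mul, mul_sum]
  refine sum_mem fun v hv => ?_
  have hterm : monomial e 1 * (monomial v (coeff v u) * ∏ i ∈ Sᶜ, Q i) =
      coeff v u • (monomial (e + v) 1 * ∏ i ∈ Sᶜ, Q i) := by
    rw [smul_eq_C_mul, ← mul_assoc, ← mul_assoc, monomial_mul, C_mul_monomial, one_mul, mul_one]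
  rw [hterm]
  refine smul_mem _ _ (subset_span ⟨S, e + v, hSr, ?_, ?_, ?_, rfl⟩)
  · rw [map_add, Finsupp.degree_apply v, ← hu.degree_eq_sum_deg_support hv]
    omega
  · rw [Finsupp.support_add_eq_union]
    exact card_le_card subset_union_left
  · rw [Finsupp.support_add_eq_union]
    exact (card_union_le _ _).trans
      (Nat.add_le_add_left ((hus v hv).trans (Nat.mul_le_mul_right s hSr)) _)

lemma shiftedTerms_subset_image [Fintype σ] [DecidableEq σ] (r ℓ m : ℕ) :
    shiftedTerms Q deg s r ℓ m ⊆
      (fun p : Σ _ : Finset ι, σ →₀ ℕ => monomial p.2 1 * ∏ i ∈ p.1ᶜ, Q i) ''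
        ↑(((range (r + 1)).biUnion fun k => powersetCard k univ).sigma fun S =>
          {w ∈ (univ : Finset σ).finsuppAntidiag (ℓ + ∑ i ∈ S, deg i - r) |
            #w.support ∈ Icc m (m + r * s)}) := by
  rintro _ ⟨S, w, hSr, hw, hm, hM, rfl⟩
  refine ⟨⟨S, w⟩, ?_, rfl⟩
  simp only [mem_coe, mem_sigma, mem_biUnion, mem_range, mem_powersetCard_univ, exists_eq_right',
    mem_filter, mem_finsuppAntidiag, subset_univ, and_true, mem_Icc, ← Finsupp.degree_eq_sum]
  omega

variable {Q deg s}
variable (hhom : ∀ i, (Q i).IsHomogeneous (deg i)) (hsupp : ∀ i, (Q i).MonomialSupportLE s)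
include hhom hsupp

lemma pderiv_mem_span_derivTerms {k : ℕ} {P : MvPolynomial σ R}
    (hP : P ∈ derivTerms Q deg s k) (x : σ) :
    pderiv x P ∈ span R (derivTerms Q deg s (k + 1)) := by
  obtain ⟨S, u, d, hSk, hd, hu, hus, rfl⟩ := hP
  rw [Derivation.leibniz, (pderiv x).leibniz_finset_prod, smul_sum]
  refine add_mem (sum_mem fun j hj => ?_) ?_
  · obtain hdj | hdj := eq_or_ne (deg j) 0
    · simp [(hdj ▸ hhom j).pderiv_eq_zero]
    have hjS : j ∉ S := by simpa using hj
    refine subset_span ⟨insert j S, u * pderiv x (Q j), d + (deg j - 1), ?_, ?_,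
      hu.mul (hhom j).pderiv, ?_, ?_⟩
    · rw [card_insert_of_notMem hjS]; omega
    · rw [sum_insert hjS]; omega
    · rw [card_insert_of_notMem hjS, add_one_mul]; exact hus.mul ((hsupp j).pderiv x)
    · rw [compl_insert, smul_eq_mul, smul_eq_mul]; ring
  · obtain rfl | hd0 := eq_or_ne d 0
    · simp [hu.pderiv_eq_zero]
    exact subset_span ⟨S, pderiv x u, d - 1, by omega, by omega, hu.pderiv, hus.pderiv x,
      by rw [smul_eq_mul, mul_comm]⟩

lemma derivList_prod_mem_span_derivTerms (L : List σ) :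
    derivList L (∏ i, Q i) ∈ span R (derivTerms Q deg s L.length) := by
  induction L with
  | nil => exact subset_span (prod_mem_derivTerms_zero Q deg s)
  | cons x L ih =>
    have h : span R (derivTerms Q deg s L.length) ≤
        (span R (derivTerms Q deg s (L.length + 1))).comap (pderiv x).toLinearMap :=
      span_le.2 fun P hP => pderiv_mem_span_derivTerms hhom hsupp hP x
    exact h ih

lemma derivMon_prod_mem_span_derivTerms (γ : σ →₀ ℕ) :
    derivMon γ (∏ i, Q i) ∈ span R (derivTerms Q deg s γ.degree) := by
  have hlen : (Finsupp.toMultiset γ).toList.length = γ.degree := by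
    rw [Multiset.length_toList, Finsupp.card_toMultiset]; rfl
  rw [derivMon, ← hlen]
  exact derivList_prod_mem_span_derivTerms hhom hsupp _

theorem shiftedSpan_prod_le_span_shiftedTerms (r ℓ m : ℕ) :
    shiftedSpan r ℓ m (∏ i, Q i) ≤ span R (shiftedTerms Q deg s r ℓ m) := by
  refine span_le.2 ?_
  rintro _ ⟨e, γ, rfl, rfl, hγ, rfl⟩
  rw [monDeg_eq_degree] at hγ ⊢
  subst hγ
  have h : span R (derivTerms Q deg s γ.degree) ≤
      (span R (shiftedTerms Q deg s γ.degree e.degree #e.support)).comap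
        (LinearMap.mulLeft R (monomial e 1)) :=
    span_le.2 fun P hP => monomial_mul_mem_span_shiftedTerms Q deg s hP e
  exact h (derivMon_prod_mem_span_derivTerms hhom hsupp γ)

end ProductDerivatives

section MonomialCount

variable {σ : Type*} [Fintype σ] [DecidableEq σ]

lemma card_biUnion_powersetCard_range_le {ι : Type*} [Fintype ι] [DecidableEq ι] (r : ℕ) :
    #((range (r + 1)).biUnion fun k => powersetCard k (univ : Finset ι)) ≤
      (Fintype.card ι + r).choose r := by
  refine card_biUnion_le.trans (le_of_eq_of_le ?_ (Nat.sum_range_choose_le_add_choose _ r))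
  simp only [card_powersetCard, card_univ]

lemma card_filter_card_support_eq_le (D j : ℕ) :
    #{w ∈ (univ : Finset σ).finsuppAntidiag D | #w.support = j} ≤
      (Fintype.card σ).choose j * (D - 1).choose (j - 1) := by
  rcases lt_or_ge D j with hDj | hjD
  · rw [filter_false_of_mem fun w hw hwj => ?_, card_empty]
    · exact Nat.zero_le _
    rw [mem_finsuppAntidiag, ← Finsupp.degree_eq_sum] at hw
    have := Finsupp.card_support_le_degree w
    omega
  -- stars and bars: lowering every exponent on the support by one is injective
  let pred : (σ →₀ ℕ) → (σ →₀ ℕ) := fun w => w.mapRange (· - 1) (by simp)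
  calc _ ≤ #((powersetCard j univ).sigma fun S => S.finsuppAntidiag (D - j)) := by
        refine card_le_card_of_injOn (fun w => (⟨w.support, pred w⟩ : Σ _ : Finset σ, σ →₀ ℕ))
          ?_ ?_
        · intro w hw
          obtain ⟨hwD, rfl⟩ := mem_filter.1 (mem_coe.1 hw)
          rw [mem_finsuppAntidiag, ← Finsupp.degree_eq_sum, Finsupp.degree_apply] at hwD
          have hpos : ∀ i ∈ w.support, 1 ≤ w i := fun i hi =>
            Nat.one_le_iff_ne_zero.2 (Finsupp.mem_support_iff.1 hi)
          simp only [coe_sigma, Set.mem_sigma_iff, mem_coe, mem_powersetCard_univ,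
            mem_finsuppAntidiag, true_and]
          refine ⟨?_, fun i hi => ?_⟩
          · change ∑ i ∈ w.support, (w i - 1) = _
            rw [sum_tsub_distrib _ hpos, hwD.1, card_eq_sum_ones]
          · simpa using mt (fun h : w i = 0 => by simp [pred, h]) (Finsupp.mem_support_iff.1 hi)
        · intro w _ w' _ h
          obtain ⟨hsupp, hpred⟩ := Sigma.mk.inj_iff.1 h
          ext i
          by_cases hi : i ∈ w.support
          · have := DFunLike.congr_fun (eq_of_heq hpred) i
            have hw' : i ∈ w'.support := hsupp ▸ hi
            simp only [pred, Finsupp.mapRange_apply, Finsupp.mem_support_iff] at this hi hw'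
            omega
          · rw [Finsupp.notMem_support_iff.1 hi, Finsupp.notMem_support_iff.1 (hsupp ▸ hi)]
    _ = (Fintype.card σ).choose j * (j + (D - j) - 1).choose (D - j) := by
        rw [card_sigma, sum_congr rfl fun S hS => by
          rw [card_finsuppAntidiag_nat_eq_choose, (mem_powersetCard_univ.1 hS)]]
        rw [sum_const, card_powersetCard, card_univ, smul_eq_mul]
    _ ≤ _ := by
        rw [show j + (D - j) - 1 = D - 1 by omega]
        exact Nat.mul_le_mul_left _ (Nat.choose_sub_le_choose_sub_one hjD)

lemma card_filter_card_support_mem_Icc_le {D L a b : ℕ} (hD : D - 1 ≤ L)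
    (hbσ : 2 * b ≤ Fintype.card σ) (hbL : 2 * (b - 1) ≤ L) :
    #{w ∈ (univ : Finset σ).finsuppAntidiag D | #w.support ∈ Icc a b} ≤
      (b + 1 - a) * ((Fintype.card σ).choose b * L.choose (b - 1)) := by
  rw [card_eq_sum_card_fiberwise (f := fun w : σ →₀ ℕ => #w.support) (t := Icc a b) ?maps]
  case maps => exact fun w hw => (mem_filter.1 hw).2
  calc _ ≤ ∑ j ∈ Icc a b, (Fintype.card σ).choose b * L.choose (b - 1) :=
        sum_le_sum fun j hj => ?_
     _ = _ := by rw [sum_const, Nat.card_Icc, smul_eq_mul]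
  have hj := mem_Icc.1 hj
  calc _ ≤ #{w ∈ (univ : Finset σ).finsuppAntidiag D | #w.support = j} :=
        card_le_card (filter_subset_filter _ (filter_subset _ _))
    _ ≤ _ := card_filter_card_support_eq_le D j
    _ ≤ _ := Nat.mul_le_mul (Nat.choose_le_choose_of_le_of_two_mul_le hj.2 hbσ)
        ((Nat.choose_le_choose _ hD).trans
          (Nat.choose_le_choose_of_le_of_two_mul_le (by omega) hbL))

end MonomialCount

theorem stmt3_general {F : Type} [Field F] {N n s : ℕ}
    (Q : Fin n → MvPolynomial (Fin N) F) (deg : Fin n → ℕ)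
    (hhom : ∀ i, (Q i).IsHomogeneous (deg i))
    (hdegsum : ∑ i, deg i = n)
    (hsupp : ∀ i, ∀ u ∈ (Q i).support, u.support.card ≤ s)
    (r ℓ m : ℕ) (hrn : r ≤ n)
    (hN : 2 * (m + r * s) ≤ N) (hℓ2 : 2 * (m + r * s) ≤ ℓ) :
    Module.finrank F (shiftedSpan r ℓ m (∏ i, Q i)) ≤
      (n - r + 1) * (r * s + 1) * (n + r).choose r * N.choose (m + r * s) *
        (ℓ + n - r - 1).choose (m + r * s - 1) := by
  classical
  set bound := (r * s + 1) * (N.choose (m + r * s) * (ℓ + n - r - 1).choose (m + r * s - 1))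
  have hsubsets := card_biUnion_powersetCard_range_le (ι := Fin n) r
  rw [Fintype.card_fin] at hsubsets
  have hmonomials (S : Finset (Fin n)) :
      #{w ∈ (univ : Finset (Fin N)).finsuppAntidiag (ℓ + ∑ i ∈ S, deg i - r) |
        #w.support ∈ Icc m (m + r * s)} ≤ bound := by
    have : ∑ i ∈ S, deg i ≤ n := (sum_le_sum_of_subset (subset_univ S)).trans hdegsum.le
    simpa [show m + r * s + 1 - m = r * s + 1 by omega] using
      card_filter_card_support_mem_Icc_le (σ := Fin N) (D := ℓ + ∑ i ∈ S, deg i - r)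
        (L := ℓ + n - r - 1) (a := m) (b := m + r * s) (by omega) (by simpa using hN) (by omega)
  calc _ ≤ _ := Submodule.finrank_mono
        ((shiftedSpan_prod_le_span_shiftedTerms hhom hsupp r ℓ m).trans
          (Submodule.span_mono ((shiftedTerms_subset_image Q deg s r ℓ m).trans_eq coe_image.symm)))
    _ ≤ _ := (finrank_span_finset_le_card _).trans card_image_le
    _ ≤ (n + r).choose r * bound := by
        rw [card_sigma]
        exact (sum_le_card_nsmul _ _ _ fun S _ => hmonomials S).trans
          (Nat.mul_le_mul_right _ hsubsets)
    _ ≤ 1 * (r * s + 1) * (n + r).choose r * N.choose (m + r * s) *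
          (ℓ + n - r - 1).choose (m + r * s - 1) := le_of_eq (by ring)
    _ ≤ _ := by gcongr; omega

/-- Upper bound on the complexity of a single product gate: if
`Q = Π_{i=1}^n Q_i` with each `Q_i` homogeneous, `Σ_i deg Q_i = n`, and every monomial of
every `Q_i` of support at most `s`, then for positive `r ≤ n`, `ℓ`, `m` with
`m + rs ≤ N/2` and `m + rs ≤ ℓ/2`:
`Dim⟨∂^r Q⟩_{(ℓ,m)} ≤ (n-r+1)(rs+1) C(n+r,r) C(N,m+rs) C(ℓ+n-r-1, m+rs-1)`. -/
theorem stmt3 {F : Type} [Field F] {N n s : ℕ}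
    (Q : Fin n → MvPolynomial (Fin N) F) (deg : Fin n → ℕ)
    (hhom : ∀ i, (Q i).IsHomogeneous (deg i))
    (hdegsum : ∑ i, deg i = n)
    (hsupp : ∀ i, ∀ u ∈ (Q i).support, u.support.card ≤ s)
    (r ℓ m : ℕ) (hr : 0 < r) (hrn : r ≤ n) (hℓ : 0 < ℓ) (hm : 0 < m)
    (hN : 2 * (m + r * s) ≤ N) (hℓ2 : 2 * (m + r * s) ≤ ℓ) :
    Module.finrank F (shiftedSpan r ℓ m (∏ i, Q i)) ≤
      (n - r + 1) * (r * s + 1) * (n + r).choose r * N.choose (m + r * s) *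
        (ℓ + n - r - 1).choose (m + r * s - 1) :=
  stmt3_general Q deg hhom hdegsum hsupp r ℓ m hrn hN hℓ2
end

section
/- Let n = 2^k, let d < n, and let r be a positive integer with n − r > d and r < d − 1. Let S ⊆ 𝔽_n be any set of r rows. Then for every tuple (j_i)_{i∈S} ∈ 𝔽_n^S, writing α = Π_{i∈S} x_{i,j_i}, the partial derivative ∂_α(NW_d) is a nonzero polynomial, and the map (j_i)_{i∈S} ↦ ∂_α(NW_d) is injective; hence the set {∂_α(NW_d) : α ∈ M^S} consists of exactly n^r distinct nonzero polynomials. -/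
/-!
For `γ = ∏_{i ∈ S} x_{i, j_i}`, the derivative `∂_γ NW_d` keeps exactly the terms of the
polynomials `f` of degree `< d` with `f(i) = j_i` on `S`, each turned into the monomial
`∏_{i ∉ S} x_{i, f(i)}`. Since `|S| ≤ d`, Lagrange interpolation provides such an `f`, and since
`d ≤ n - r = |Sᶜ|`, distinct `f` give distinct monomials. Hence `∂_γ NW_d` is a nonempty sum of
distinct monomials, and each of them determines `f`, hence the tuple `(j_i) = (f(i))`.
-/

open MvPolynomial

/-- The Nisan–Wigderson polynomial `NW_d`, a polynomial in the variables
`x_{i,j}`, `i, j ∈ F`, given by `Σ_f Π_i x_{i, f(i)}` where `f` ranges over the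
(coefficient vectors of) univariate polynomials of degree at most `d - 1`. -/
noncomputable def NW (F : Type*) [Field F] [Fintype F] (d : ℕ) :
    MvPolynomial (F × F) F :=
  ∑ a : Fin d → F, ∏ i : F, MvPolynomial.X (i, ∑ j : Fin d, a j * i ^ (j : ℕ))

namespace MvPolynomial

variable {σ R : Type*} [CommSemiring R]

theorem derivList_sum {ι : Type*} (L : List σ) (s : Finset ι) (f : ι → MvPolynomial σ R) :
    derivList L (∑ i ∈ s, f i) = ∑ i ∈ s, derivList L (f i) := by
  induction L with
  | nil => rfl
  | cons x L ih => exact (congrArg (pderiv x) ih).trans (map_sum _ _ _)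

theorem derivMon_sum {ι : Type*} (γ : σ →₀ ℕ) (s : Finset ι) (f : ι → MvPolynomial σ R) :
    derivMon γ (∑ i ∈ s, f i) = ∑ i ∈ s, derivMon γ (f i) :=
  derivList_sum _ _ _

theorem derivList_monomial [DecidableEq σ] {L : List σ} (hL : L.Nodup) (m : σ →₀ ℕ) (c : R) :
    derivList L (monomial m c) =
      monomial (m - Multiset.toFinsupp ↑L) (c * (L.map fun x => (m x : R)).prod) := by
  induction L with
  | nil => simp [derivList]
  | cons x L ih =>
    obtain ⟨hx, hL⟩ := List.nodup_cons.mp hL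
    have hmx : (m - Multiset.toFinsupp (L : Multiset σ)) x = m x := by
      simp [List.count_eq_zero.mpr hx]
    change pderiv x (derivList L _) = _
    rw [ih hL, pderiv_monomial, hmx, tsub_tsub, ← Multiset.cons_coe, ← Multiset.singleton_add,
      Multiset.toFinsupp_add, Multiset.toFinsupp_singleton, add_comm, List.map_cons,
      List.prod_cons, mul_assoc, mul_comm (m x : R)]

theorem derivMon_monomial {γ : σ →₀ ℕ} (hγ : ∀ x, γ x ≤ 1) (m : σ →₀ ℕ) (c : R) :
    derivMon γ (monomial m c) = monomial (m - γ) (c * ∏ x ∈ γ.support, (m x : R)) := by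
  classical
  have hnodup : γ.toMultiset.Nodup :=
    Multiset.nodup_iff_count_le_one.mpr fun x => by simpa using hγ x
  have hL : (γ.toMultiset.toList).Nodup := by rwa [← Multiset.coe_nodup, Multiset.coe_toList]
  rw [derivMon, derivList_monomial hL, Multiset.coe_toList, Finsupp.toMultiset_toFinsupp,
    Multiset.prod_map_toList, Finset.prod_eq_multiset_prod, ← Finsupp.toFinset_toMultiset,
    Multiset.toFinset_val, hnodup.dedup]

theorem derivMon_monomial_of_le_one {γ m : σ →₀ ℕ} (hγ : ∀ x, γ x ≤ 1) (hm : ∀ x, m x ≤ 1) :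
    derivMon γ (monomial m (1 : R)) = if γ ≤ m then monomial (m - γ) 1 else 0 := by
  rw [derivMon_monomial hγ, one_mul]
  split_ifs with hγm
  · rw [Finset.prod_eq_one fun x hx => ?_]
    have hmx : m x = 1 :=
      (hm x).antisymm ((Nat.one_le_iff_ne_zero.mpr (Finsupp.mem_support_iff.mp hx)).trans (hγm x))
    rw [hmx, Nat.cast_one]
  · obtain ⟨x, hx⟩ : ∃ x, m x < γ x := by simpa [Finsupp.le_def] using hγm
    have hmx : m x = 0 := by have := hγ x; omega
    rw [Finset.prod_eq_zero (i := x) (Finsupp.mem_support_iff.mpr (by omega)) (by simp [hmx]),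
      monomial_zero]

end MvPolynomial

section Graph

variable {ι κ : Type*}

/-- The exponent vector of `∏_{i ∈ s} x_{i, f i}`, the monomial traced by the graph of `f`
over `s`. -/
noncomputable def graphExp (s : Finset ι) (f : ι → κ) : ι × κ →₀ ℕ :=
  ∑ i ∈ s, Finsupp.single (i, f i) 1

theorem graphExp_apply [DecidableEq ι] [DecidableEq κ] (s : Finset ι) (f : ι → κ) (i : ι)
    (c : κ) : graphExp s f (i, c) = if i ∈ s ∧ f i = c then 1 else 0 := by
  simp [graphExp, Finsupp.finsetSum_apply, Finsupp.single_apply, ite_and, Finset.sum_ite_eq']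

theorem graphExp_apply_le_one (s : Finset ι) (f : ι → κ) (x : ι × κ) : graphExp s f x ≤ 1 := by
  classical
  rw [graphExp_apply]
  split_ifs <;> omega

theorem graphExp_congr {s : Finset ι} {f g : ι → κ} (h : ∀ i ∈ s, f i = g i) :
    graphExp s f = graphExp s g :=
  Finset.sum_congr rfl fun i hi => by rw [h i hi]

theorem graphExp_le_graphExp_iff {s t : Finset ι} (hst : s ⊆ t) {f g : ι → κ} :
    graphExp s g ≤ graphExp t f ↔ ∀ i ∈ s, g i = f i := by
  classical
  constructor
  · intro h i hi
    have hle := h (i, g i)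
    rw [graphExp_apply, graphExp_apply, if_pos ⟨hi, rfl⟩] at hle
    by_contra hne
    rw [if_neg fun h => hne h.2.symm] at hle
    omega
  · intro h
    calc graphExp s g = graphExp s f := graphExp_congr h
      _ ≤ graphExp t f := Finset.sum_le_sum_of_subset hst

theorem eqOn_of_graphExp_eq {s : Finset ι} {f g : ι → κ} (h : graphExp s f = graphExp s g) :
    ∀ i ∈ s, f i = g i :=
  (graphExp_le_graphExp_iff subset_rfl).mp h.le

theorem graphExp_univ_sub [Fintype ι] [DecidableEq ι] (s : Finset ι) (f : ι → κ) :
    graphExp Finset.univ f - graphExp s f = graphExp sᶜ f := by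
  simp only [graphExp, ← Finset.sum_add_sum_compl s, add_tsub_cancel_left]

theorem sum_attach_single_eq_graphExp {s : Finset ι} {j : s → κ} {g : ι → κ}
    (hg : ∀ i : s, g i = j i) :
    ∑ i ∈ s.attach, Finsupp.single ((i : ι), j i) 1 = graphExp s g := by
  simp_rw [← hg]
  exact Finset.sum_attach s fun i => Finsupp.single (i, g i) 1

theorem prod_X_eq_monomial_graphExp {R : Type*} [CommSemiring R] (s : Finset ι) (f : ι → κ) :
    ∏ i ∈ s, (X (i, f i) : MvPolynomial (ι × κ) R) = monomial (graphExp s f) 1 := by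
  rw [graphExp, monomial_sum_one]
  rfl

end Graph

theorem coeff_sum_monomial_one {σ ι R : Type*} [CommSemiring R] [DecidableEq ι]
    {e : ι → σ →₀ ℕ} (he : Function.Injective e) (A : Finset ι) (a : ι) :
    coeff (e a) (∑ b ∈ A, monomial (e b) (1 : R)) = if a ∈ A then 1 else 0 := by
  classical
  simp [coeff_sum, coeff_monomial, he.eq_iff]

section CoeffEval

open Polynomial

def coeffEval {R : Type*} [Semiring R] {d : ℕ} (a : Fin d → R) (x : R) : R :=
  ∑ j, a j * x ^ (j : ℕ)

theorem coeffEval_eq_eval {R : Type*} [CommRing R] {d : ℕ} (a : Fin d → R) (x : R) :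
    coeffEval a x = ((degreeLTEquiv R d).symm a : R[X]).eval x := by
  simp [eval_eq_sum_degreeLTEquiv (Submodule.coe_mem _), coeffEval]

variable {F : Type*} [Field F] {d : ℕ}

theorem eq_of_coeffEval_eqOn {T : Finset F} (hT : d ≤ T.card) {a b : Fin d → F}
    (h : ∀ x ∈ T, coeffEval a x = coeffEval b x) : a = b := by
  have hdeg (c : Fin d → F) : ((degreeLTEquiv F d).symm c : F[X]).degree < T.card :=
    (mem_degreeLT.mp (Submodule.coe_mem _)).trans_le (by exact_mod_cast hT)
  have heq := Polynomial.eq_of_degrees_lt_of_eval_finset_eq T (hdeg a) (hdeg b)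
    (by simpa only [coeffEval_eq_eval] using h)
  exact (degreeLTEquiv F d).symm.injective (Subtype.ext heq)

theorem exists_coeffEval_eqOn {S : Finset F} (hS : S.card ≤ d) (g : F → F) :
    ∃ a : Fin d → F, ∀ x ∈ S, coeffEval a x = g x := by
  classical
  let p := Lagrange.interpolate S id g
  have hp : p ∈ degreeLT F d := mem_degreeLT.mpr
    ((Lagrange.degree_interpolate_lt (r := g) (Set.injOn_id _)).trans_le (by exact_mod_cast hS))
  refine ⟨degreeLTEquiv F d ⟨p, hp⟩, fun x hx => ?_⟩
  rw [coeffEval_eq_eval, LinearEquiv.symm_apply_apply]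
  exact Lagrange.eval_interpolate_at_node g (Set.injOn_id _) hx

end CoeffEval

section NW

variable {F : Type*} [Field F] [Fintype F] {d : ℕ}

theorem NW_eq_sum_monomial :
    NW F d = ∑ a : Fin d → F, monomial (graphExp Finset.univ (coeffEval a)) 1 := by
  simp_rw [← prod_X_eq_monomial_graphExp]
  rfl

variable [DecidableEq F]

theorem derivMon_graphExp_NW (S : Finset F) (g : F → F) :
    derivMon (graphExp S g) (NW F d) =
      ∑ a ∈ Finset.univ.filter (fun a : Fin d → F => ∀ i ∈ S, g i = coeffEval a i),
        monomial (graphExp Sᶜ (coeffEval a)) 1 := by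
  rw [NW_eq_sum_monomial, derivMon_sum, Finset.sum_filter]
  refine Finset.sum_congr rfl fun a _ => ?_
  rw [derivMon_monomial_of_le_one (graphExp_apply_le_one _ _) (graphExp_apply_le_one _ _)]
  by_cases h : ∀ i ∈ S, g i = coeffEval a i
  · rw [if_pos ((graphExp_le_graphExp_iff S.subset_univ).mpr h), if_pos h, graphExp_congr h,
      graphExp_univ_sub]
  · rw [if_neg (mt (graphExp_le_graphExp_iff S.subset_univ).mp h), if_neg h]

/-- The monomials of `∂_γ NW_d` are pairwise distinct: the part off `S` of the graph of a
polynomial determines it, as its degree is `< d ≤ |Sᶜ|`. -/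
theorem coeff_derivMon_graphExp_NW {S : Finset F} (hS : d ≤ Sᶜ.card)
    (g : F → F) (a : Fin d → F) :
    coeff (graphExp Sᶜ (coeffEval a)) (derivMon (graphExp S g) (NW F d)) =
      if ∀ i ∈ S, g i = coeffEval a i then 1 else 0 := by
  have he : Function.Injective fun a : Fin d → F => graphExp Sᶜ (coeffEval a) :=
    fun a b h => eq_of_coeffEval_eqOn hS (eqOn_of_graphExp_eq h)
  rw [derivMon_graphExp_NW, coeff_sum_monomial_one he]
  simp

variable {S : Finset F} (hSd : S.card ≤ d) (hSc : d ≤ Sᶜ.card)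
include hSd hSc

theorem derivMon_graphExp_NW_ne_zero (g : F → F) : derivMon (graphExp S g) (NW F d) ≠ 0 := by
  obtain ⟨a, ha⟩ := exists_coeffEval_eqOn hSd g
  intro h
  have hcoeff := coeff_derivMon_graphExp_NW hSc g a
  rw [h, coeff_zero, if_pos fun i hi => (ha i hi).symm] at hcoeff
  exact zero_ne_one hcoeff

theorem eqOn_of_derivMon_graphExp_NW_eq {g g' : F → F}
    (h : derivMon (graphExp S g) (NW F d) = derivMon (graphExp S g') (NW F d)) :
    ∀ i ∈ S, g i = g' i := by
  obtain ⟨a, ha⟩ := exists_coeffEval_eqOn hSd g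
  have hcoeff := congrArg (coeff (graphExp Sᶜ (coeffEval a))) h
  rw [coeff_derivMon_graphExp_NW hSc, coeff_derivMon_graphExp_NW hSc,
    if_pos fun i hi => (ha i hi).symm] at hcoeff
  have ha' : ∀ i ∈ S, g' i = coeffEval a i := by
    by_contra hne
    rw [if_neg hne] at hcoeff
    exact one_ne_zero hcoeff
  exact fun i hi => (ha i hi).symm.trans (ha' i hi).symm

end NW

theorem stmt5_general (k d r : ℕ) (F : Type) [Field F] [Fintype F]
    (hcard : Fintype.card F = 2 ^ k) (hdn : d + r < 2 ^ k)
    (hrd : r + 1 < d) (S : Finset F) (hS : S.card = r) :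
    (∀ j : S → F,
      derivMon (∑ i ∈ S.attach, Finsupp.single ((i : F), j i) 1) (NW F d) ≠ 0) ∧
    Function.Injective (fun j : S → F =>
      derivMon (∑ i ∈ S.attach, Finsupp.single ((i : F), j i) 1) (NW F d)) ∧
    (Set.range fun j : S → F =>
        derivMon (∑ i ∈ S.attach, Finsupp.single ((i : F), j i) 1) (NW F d)).ncard =
      (2 ^ k) ^ r := by
  classical
  have hSd : S.card ≤ d := by omega
  have hSc : d ≤ Sᶜ.card := by rw [Finset.card_compl, hcard, hS]; omega
  let extend (j : S → F) : F → F := Function.extend Subtype.val j 0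
  have hγ (j : S → F) :
      ∑ i ∈ S.attach, Finsupp.single ((i : F), j i) 1 = graphExp S (extend j) :=
    sum_attach_single_eq_graphExp (Subtype.val_injective.extend_apply j 0)
  have hinj : Function.Injective fun j : S → F =>
      derivMon (∑ i ∈ S.attach, Finsupp.single ((i : F), j i) 1) (NW F d) := by
    intro j j' h
    simp only [hγ] at h
    funext i
    rw [← Subtype.val_injective.extend_apply j 0 i, ← Subtype.val_injective.extend_apply j' 0 i]
    exact eqOn_of_derivMon_graphExp_NW_eq hSd hSc h i i.2
  refine ⟨fun j => hγ j ▸ derivMon_graphExp_NW_ne_zero hSd hSc _, hinj, ?_⟩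
  rw [← Set.image_univ, Set.ncard_image_of_injective _ hinj, Set.ncard_univ,
    Nat.card_eq_fintype_card, Fintype.card_fun, hcard, Fintype.card_coe, hS]

/-- Let `n = 2^k`, `d < n`, `r` a positive integer with `n - r > d` and
`r < d - 1`, and `S ⊆ 𝔽_n` a set of `r` rows. For every tuple `(j_i)_{i ∈ S}`, writing
`α = Π_{i ∈ S} x_{i, j_i}`, the partial derivative `∂_α NW_d` is nonzero; the map
`(j_i) ↦ ∂_α NW_d` is injective; hence `{∂_α NW_d : α ∈ M^S}` consists of exactly `n^r`
distinct nonzero polynomials. -/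
theorem stmt5 (k d r : ℕ) (F : Type) [Field F] [Fintype F]
    (hcard : Fintype.card F = 2 ^ k) (hd1 : 1 ≤ d) (hdn : d + r < 2 ^ k)
    (hr : 0 < r) (hrd : r + 1 < d) (S : Finset F) (hS : S.card = r) :
    (∀ j : S → F,
      derivMon (∑ i ∈ S.attach, Finsupp.single ((i : F), j i) 1) (NW F d) ≠ 0) ∧
    Function.Injective (fun j : S → F =>
      derivMon (∑ i ∈ S.attach, Finsupp.single ((i : F), j i) 1) (NW F d)) ∧
    (Set.range fun j : S → F =>
        derivMon (∑ i ∈ S.attach, Finsupp.single ((i : F), j i) 1) (NW F d)).ncard =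
      (2 ^ k) ^ r :=
  stmt5_general k d r F hcard hdn hrd S hS
end

section
/- Let n = 2^k, let d < n, and let r be a positive integer with n − r > d and r < d − 1. Let S ⊆ 𝔽_n be a set of r rows. Then for any two distinct monomials α, β ∈ M^S, the leading monomials Lead-Mon(∂_α(NW_d)) and Lead-Mon(∂_β(NW_d)) are multilinear monomials of degree n − r whose distance is at least n − r − d. -/
open MvPolynomial

/-- The leading monomial (largest exponent vector in the support) of a polynomial with
respect to a given linear order on monomials; junk value `0` for the zero polynomial. -/
noncomputable def leadMon {σ F : Type*} [CommSemiring F]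
    (lo : LinearOrder (σ →₀ ℕ)) (P : MvPolynomial σ F) : σ →₀ ℕ :=
  WithBot.unbotD 0 (@Finset.max _ lo P.support)

/-- The lexicographic order on the monomials in the variables `x_{i,j}`, `i, j ∈ F`,
induced by ordering the variables as `x_{i₁,j₁} > x_{i₂,j₂}` iff `i₁ < i₂`, or `i₁ = i₂`
and `j₁ < j₂`, under the identification `π` of `F` with `{1, …, n}`. -/
noncomputable def lexMonOrder {F : Type*} {n : ℕ} (π : F ≃ Fin n) :
    LinearOrder ((F × F) →₀ ℕ) :=
  letI : LinearOrder (F × F) :=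
    LinearOrder.lift' (⇑((Equiv.prodCongr π π).trans toLex))
      ((Equiv.prodCongr π π).trans toLex).injective
  LinearOrder.lift' (⇑(toLex : ((F × F) →₀ ℕ) ≃ Lex ((F × F) →₀ ℕ)))
    (toLex : ((F × F) →₀ ℕ) ≃ Lex ((F × F) →₀ ℕ)).injective

/-!
Expanding `NW_d = ∑_f ∏_i x_{i,f(i)}`, the derivative along `α = ∏_{i ∈ S} x_{i,j(i)}` kills
every term except those with `f = j` on `S`, leaving `∑_{f|_S = j} ∏_{i ∉ S} x_{i,f(i)}`. Since
`deg f < d ≤ |Sᶜ|`, distinct `f` give distinct monomials, so nothing cancels and the support is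
exactly this set of multilinear monomials of degree `n - r`; it is nonempty by Lagrange
interpolation, as `r ≤ d`. A monomial of `∂_α NW_d` and one of `∂_β NW_d` come from polynomials
`f ≠ g`, which agree on fewer than `d` points, so the two monomials share fewer than `d`
variables. This holds for any two monomials of the supports, in particular for the leading ones.
-/

def graphOn {α β : Type*} (f : α → β) (s : Finset α) : Finset (α × β) :=
  s.map ⟨fun x => (x, f x), fun _ _ h => (Prod.ext_iff.1 h).1⟩

section Graph

variable {α β : Type*} {f g : α → β} {s : Finset α}

theorem mem_graphOn {p : α × β} : p ∈ graphOn f s ↔ p.1 ∈ s ∧ f p.1 = p.2 := by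
  simp only [graphOn, Finset.mem_map]
  constructor
  · rintro ⟨x, hx, rfl⟩
    exact ⟨hx, rfl⟩
  · rintro ⟨hx, h⟩
    exact ⟨p.1, hx, Prod.ext rfl h⟩

theorem card_graphOn : (graphOn f s).card = s.card := Finset.card_map _

theorem graphOn_inter_graphOn [DecidableEq α] [DecidableEq β] :
    graphOn f s ∩ graphOn g s = graphOn f (s.filter fun i => f i = g i) := by
  ext ⟨x, y⟩
  simp only [Finset.mem_inter, mem_graphOn, Finset.mem_filter]
  grind

end Graph

section Multilinear

variable {σ R : Type*} [CommSemiring R]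

theorem sum_single_one_apply [DecidableEq σ] (A : Finset σ) (x : σ) :
    (∑ y ∈ A, Finsupp.single y 1 : σ →₀ ℕ) x = if x ∈ A then 1 else 0 := by
  simp [Finsupp.finsetSum_apply, Finsupp.single_apply]

theorem sum_single_one_apply_le_one (A : Finset σ) (x : σ) :
    (∑ y ∈ A, Finsupp.single y 1 : σ →₀ ℕ) x ≤ 1 := by
  classical
  rw [sum_single_one_apply]
  split_ifs <;> simp

theorem support_sum_single_one [DecidableEq σ] (A : Finset σ) :
    (∑ y ∈ A, Finsupp.single y 1 : σ →₀ ℕ).support = A := by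
  ext x
  simp [sum_single_one_apply]

theorem sum_sum_single_one (A : Finset σ) :
    ((∑ y ∈ A, Finsupp.single y 1 : σ →₀ ℕ).sum fun _ c => c) = A.card := by
  have h := Finsupp.card_toMultiset (∑ y ∈ A, Finsupp.single y 1)
  rw [Finsupp.toMultiset_sum_single, one_nsmul, Finset.card_val] at h
  exact h.symm

theorem prod_X_eq_monomial (A : Finset σ) :
    (∏ y ∈ A, X y : MvPolynomial σ R) = monomial (∑ y ∈ A, Finsupp.single y 1) 1 :=
  (monomial_sum_one A _).symm

theorem pderiv_prod_X [DecidableEq σ] (x : σ) (A : Finset σ) :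
    pderiv x (∏ y ∈ A, X y : MvPolynomial σ R) =
      if x ∈ A then ∏ y ∈ A.erase x, X y else 0 := by
  rw [prod_X_eq_monomial, pderiv_monomial, sum_single_one_apply]
  split_ifs with hx
  · rw [prod_X_eq_monomial, ← Finset.add_sum_erase A _ hx, add_tsub_cancel_left,
      Nat.cast_one, mul_one]
  · simp

theorem derivList_prod_X [DecidableEq σ] {L : List σ} (hL : L.Nodup) (A : Finset σ) :
    derivList L (∏ y ∈ A, X y : MvPolynomial σ R) =
      if L.toFinset ⊆ A then ∏ y ∈ A \ L.toFinset, X y else 0 := by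
  induction L with
  | nil => simp [derivList]
  | cons x L ih =>
    obtain ⟨hxL, hL⟩ := List.nodup_cons.1 hL
    change pderiv x (derivList L _) = _
    rw [ih hL, List.toFinset_cons]
    by_cases hLA : L.toFinset ⊆ A
    · rw [if_pos hLA, pderiv_prod_X, Finset.sdiff_insert]
      by_cases hxA : x ∈ A
      · rw [if_pos (by simp [hxA, hxL]), if_pos (Finset.insert_subset hxA hLA)]
      · rw [if_neg (by simp [hxA]), if_neg fun h => hxA (Finset.insert_subset_iff.1 h).1]
    · rw [if_neg hLA, if_neg fun h => hLA (Finset.insert_subset_iff.1 h).2, map_zero]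

theorem derivMon_sum_single_prod_X [DecidableEq σ] (A B : Finset σ) :
    derivMon (∑ x ∈ B, Finsupp.single x 1) (∏ y ∈ A, X y : MvPolynomial σ R) =
      if B ⊆ A then ∏ y ∈ A \ B, X y else 0 := by
  rw [derivMon, Finsupp.toMultiset_sum_single, one_nsmul]
  exact (derivList_prod_X B.nodup_toList A).trans (by rw [Finset.toList_toFinset])

theorem derivMon_finset_sum {ι : Type*} (γ : σ →₀ ℕ) (s : Finset ι)
    (f : ι → MvPolynomial σ R) :
    derivMon γ (∑ a ∈ s, f a) = ∑ a ∈ s, derivMon γ (f a) := by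
  unfold derivMon derivList
  induction (Finsupp.toMultiset γ).toList with
  | nil => rfl
  | cons x L ih => simp only [List.foldr_cons, ih, map_sum]

theorem support_sum_monomial_one [Nontrivial R] (T : Finset (σ →₀ ℕ)) :
    (∑ m ∈ T, monomial m (1 : R)).support = T := by
  classical
  ext m
  simp [coeff_sum, coeff_monomial]

theorem leadMon_mem_support (lo : LinearOrder (σ →₀ ℕ)) {P : MvPolynomial σ R}
    (hP : P.support.Nonempty) : leadMon lo P ∈ P.support := by
  obtain ⟨m, hm⟩ := @Finset.max_of_nonempty _ lo _ hP
  rw [leadMon, hm, WithBot.unbotD_coe]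
  exact @Finset.mem_of_max _ lo _ _ hm

end Multilinear

section CoefficientVectors

variable {R : Type*} [CommRing R] {d : ℕ}

def evalCoeffs (a : Fin d → R) (x : R) : R := ∑ j : Fin d, a j * x ^ (j : ℕ)

theorem evalCoeffs_eq_eval (a : Fin d → R) (x : R) :
    evalCoeffs a x = ((Polynomial.degreeLTEquiv R d).symm a : Polynomial R).eval x := by
  rw [Polynomial.eval_eq_sum_degreeLTEquiv (Subtype.prop _)]
  simp [evalCoeffs]

theorem eq_of_evalCoeffs_eqOn [IsDomain R] {a b : Fin d → R} {T : Finset R} (hT : d ≤ T.card)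
    (h : ∀ x ∈ T, evalCoeffs a x = evalCoeffs b x) : a = b := by
  have hdeg (c : Fin d → R) :
      ((Polynomial.degreeLTEquiv R d).symm c : Polynomial R).degree < T.card :=
    (Polynomial.mem_degreeLT.1 (Subtype.prop _)).trans_le (by exact_mod_cast hT)
  refine (Polynomial.degreeLTEquiv R d).symm.injective (Subtype.ext ?_)
  exact Polynomial.eq_of_degrees_lt_of_eval_finset_eq T (hdeg a) (hdeg b)
    fun x hx => by simpa only [evalCoeffs_eq_eval] using h x hx

theorem card_filter_evalCoeffs_eq_lt [IsDomain R] [DecidableEq R] {a b : Fin d → R}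
    (hab : a ≠ b) (T : Finset R) :
    (T.filter fun x => evalCoeffs a x = evalCoeffs b x).card < d := by
  by_contra! h
  exact hab (eq_of_evalCoeffs_eqOn h fun x hx => (Finset.mem_filter.1 hx).2)

theorem exists_evalCoeffs_eq {F : Type*} [Field F] [DecidableEq F] {S : Finset F}
    (hS : S.card ≤ d) (g : F → F) : ∃ a : Fin d → F, ∀ x ∈ S, evalCoeffs a x = g x := by
  have hdeg : (Lagrange.interpolate S id g).degree < d :=
    (Lagrange.degree_interpolate_lt _ (Set.injOn_id _)).trans_le (by exact_mod_cast hS)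
  refine ⟨Polynomial.degreeLTEquiv F d ⟨_, Polynomial.mem_degreeLT.2 hdeg⟩, fun x hx => ?_⟩
  rw [evalCoeffs_eq_eval, LinearEquiv.symm_apply_apply]
  exact Lagrange.eval_interpolate_at_node _ (Set.injOn_id _) hx

theorem card_graphOn_inter_graphOn_lt [IsDomain R] [DecidableEq R] {a b : Fin d → R}
    (hab : a ≠ b) (T : Finset R) :
    (graphOn (evalCoeffs a) T ∩ graphOn (evalCoeffs b) T).card < d := by
  rw [graphOn_inter_graphOn, card_graphOn]
  exact card_filter_evalCoeffs_eq_lt hab T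

end CoefficientVectors

section SubtypeGraph

variable {α β : Type*} {s : Finset α}

def graphSubtype (j : s → β) : Finset (α × β) :=
  s.attach.map ⟨fun i : s => (i.1, j i), fun _ _ h => Subtype.ext (Prod.ext_iff.1 h).1⟩

theorem mem_graphSubtype {j : s → β} {p : α × β} :
    p ∈ graphSubtype j ↔ ∃ h : p.1 ∈ s, j ⟨p.1, h⟩ = p.2 := by
  simp only [graphSubtype, Finset.mem_map, Finset.mem_attach, true_and]
  constructor
  · rintro ⟨i, rfl⟩
    exact ⟨i.2, rfl⟩
  · rintro ⟨h, hj⟩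
    exact ⟨⟨p.1, h⟩, Prod.ext rfl hj⟩

theorem sum_attach_single_eq (j : s → β) :
    ∑ i ∈ s.attach, Finsupp.single ((i : α), j i) 1 =
      ∑ p ∈ graphSubtype j, Finsupp.single p 1 := by
  rw [graphSubtype, Finset.sum_map]
  rfl

variable [Fintype α] {j : s → β} {f : α → β}

theorem graphSubtype_subset_graphOn_univ_iff :
    graphSubtype j ⊆ graphOn f Finset.univ ↔ ∀ i : s, f i = j i := by
  constructor
  · intro h i
    exact (mem_graphOn.1 (h (mem_graphSubtype (p := (i.1, j i)).2 ⟨i.2, rfl⟩))).2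
  · intro h p hp
    obtain ⟨hp₁, hp₂⟩ := mem_graphSubtype.1 hp
    exact mem_graphOn.2 ⟨Finset.mem_univ _, (h ⟨p.1, hp₁⟩).trans hp₂⟩

theorem graphOn_univ_sdiff_graphSubtype [DecidableEq α] [DecidableEq β]
    (h : ∀ i : s, f i = j i) : graphOn f Finset.univ \ graphSubtype j = graphOn f sᶜ := by
  ext ⟨x, y⟩
  simp only [Finset.mem_sdiff, mem_graphOn, mem_graphSubtype, Finset.mem_univ, true_and,
    Finset.mem_compl]
  constructor
  · rintro ⟨hxy, hn⟩
    exact ⟨fun hx => hn ⟨hx, (h ⟨x, hx⟩).symm.trans hxy⟩, hxy⟩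
  · rintro ⟨hx, hxy⟩
    exact ⟨hxy, fun ⟨hx', _⟩ => hx hx'⟩

end SubtypeGraph

section NisanWigderson

variable {F : Type*} [Field F] [Fintype F] {d : ℕ} {S : Finset F}

theorem NW_eq_sum_prod_graphOn :
    NW F d = ∑ a : Fin d → F, ∏ p ∈ graphOn (evalCoeffs a) Finset.univ, X p := by
  simp only [NW, graphOn, Finset.prod_map]
  rfl

variable [DecidableEq F]

variable (d) in
def interpolatingCoeffs (j : S → F) : Finset (Fin d → F) :=
  Finset.univ.filter fun a => ∀ i : S, evalCoeffs a i = j i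

theorem interpolatingCoeffs_nonempty (hS : S.card ≤ d) (j : S → F) :
    (interpolatingCoeffs d j).Nonempty := by
  obtain ⟨a, ha⟩ := exists_evalCoeffs_eq hS fun x => if h : x ∈ S then j ⟨x, h⟩ else 0
  exact ⟨a, Finset.mem_filter.2 ⟨Finset.mem_univ a, fun i => by simp [ha i i.2]⟩⟩

theorem ne_of_mem_interpolatingCoeffs {j₁ j₂ : S → F} (hne : j₁ ≠ j₂) {a b : Fin d → F}
    (ha : a ∈ interpolatingCoeffs d j₁) (hb : b ∈ interpolatingCoeffs d j₂) : a ≠ b := by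
  rintro rfl
  exact hne (funext fun i =>
    ((Finset.mem_filter.1 ha).2 i).symm.trans ((Finset.mem_filter.1 hb).2 i))

theorem derivMon_NW (j : S → F) :
    derivMon (∑ i ∈ S.attach, Finsupp.single ((i : F), j i) 1) (NW F d) =
      ∑ a ∈ interpolatingCoeffs d j, ∏ p ∈ graphOn (evalCoeffs a) Sᶜ, X p := by
  rw [NW_eq_sum_prod_graphOn, derivMon_finset_sum, interpolatingCoeffs, Finset.sum_filter]
  refine Finset.sum_congr rfl fun a _ => ?_
  rw [sum_attach_single_eq, derivMon_sum_single_prod_X]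
  by_cases h : ∀ i : S, evalCoeffs a i = j i
  · rw [if_pos (graphSubtype_subset_graphOn_univ_iff.2 h), if_pos h,
      graphOn_univ_sdiff_graphSubtype h]
  · rw [if_neg (mt graphSubtype_subset_graphOn_univ_iff.1 h), if_neg h]

theorem support_derivMon_NW (hdS : d ≤ Sᶜ.card) (j : S → F) :
    (derivMon (∑ i ∈ S.attach, Finsupp.single ((i : F), j i) 1) (NW F d)).support =
      (interpolatingCoeffs d j).image
        fun a => ∑ p ∈ graphOn (evalCoeffs a) Sᶜ, Finsupp.single p 1 := by
  -- without injectivity, equal monomials could cancel in characteristic 2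
  have hinj : Set.InjOn (fun a : Fin d → F => ∑ p ∈ graphOn (evalCoeffs a) Sᶜ,
      Finsupp.single p 1) (interpolatingCoeffs d j) := by
    intro a _ b _ hab
    have hgraph := congrArg Finsupp.support hab
    simp only [support_sum_single_one] at hgraph
    refine eq_of_evalCoeffs_eqOn hdS fun x hx => ?_
    have hxa : (x, evalCoeffs a x) ∈ graphOn (evalCoeffs b) Sᶜ :=
      hgraph ▸ mem_graphOn.2 ⟨hx, rfl⟩
    exact (mem_graphOn.1 hxa).2.symm
  rw [derivMon_NW]
  simp_rw [prod_X_eq_monomial]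
  rw [← Finset.sum_image (f := fun m => monomial m (1 : F)) hinj, support_sum_monomial_one]

theorem leadMon_derivMon_NW_mem (lo : LinearOrder ((F × F) →₀ ℕ)) (hSd : S.card ≤ d)
    (hdS : d ≤ Sᶜ.card) (j : S → F) :
    leadMon lo (derivMon (∑ i ∈ S.attach, Finsupp.single ((i : F), j i) 1) (NW F d)) ∈
      (interpolatingCoeffs d j).image
        fun a => ∑ p ∈ graphOn (evalCoeffs a) Sᶜ, Finsupp.single p 1 := by
  rw [← support_derivMon_NW hdS]
  refine leadMon_mem_support lo ?_
  rw [support_derivMon_NW hdS]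
  exact (interpolatingCoeffs_nonempty hSd j).image _

end NisanWigderson

theorem stmt6_general (k d r : ℕ) (F : Type) [Field F] [Fintype F] [DecidableEq F]
    (hcard : Fintype.card F = 2 ^ k) (hdn : d + r < 2 ^ k)
    (hrd : r + 1 < d) (π : F ≃ Fin (2 ^ k))
    (S : Finset F) (hS : S.card = r) (j₁ j₂ : S → F) (hne : j₁ ≠ j₂) :
    letI lo : LinearOrder ((F × F) →₀ ℕ) := lexMonOrder π
    let u := leadMon lo
      (derivMon (∑ i ∈ S.attach, Finsupp.single ((i : F), j₁ i) 1) (NW F d))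
    let v := leadMon lo
      (derivMon (∑ i ∈ S.attach, Finsupp.single ((i : F), j₂ i) 1) (NW F d))
    (∀ x, u x ≤ 1) ∧ (∀ x, v x ≤ 1) ∧
    (u.sum fun _ c => c) = 2 ^ k - r ∧ (v.sum fun _ c => c) = 2 ^ k - r ∧
    2 ^ k - r - d ≤ u.support.card - (u.support ∩ v.support).card := by
  intro u v
  have hSc : Sᶜ.card = 2 ^ k - r := by rw [Finset.card_compl, hcard, hS]
  have hdS : d ≤ Sᶜ.card := by omega
  have hSd : S.card ≤ d := by omega
  have hu : u ∈ _ := leadMon_derivMon_NW_mem (lexMonOrder π) hSd hdS j₁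
  have hv : v ∈ _ := leadMon_derivMon_NW_mem (lexMonOrder π) hSd hdS j₂
  clear_value u v
  obtain ⟨a, ha, rfl⟩ := Finset.mem_image.1 hu
  obtain ⟨b, hb, rfl⟩ := Finset.mem_image.1 hv
  simp only [support_sum_single_one, sum_sum_single_one, card_graphOn, hSc, true_and]
  refine ⟨sum_single_one_apply_le_one _, sum_single_one_apply_le_one _, ?_⟩
  have := card_graphOn_inter_graphOn_lt (ne_of_mem_interpolatingCoeffs hne ha hb) Sᶜ
  omega

/-- Let `n = 2^k`, `d < n`, `r` positive with `n - r > d`, `r < d - 1`,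
and `S` a set of `r` rows. For distinct `α, β ∈ M^S`, the leading monomials of
`∂_α NW_d` and `∂_β NW_d` are multilinear monomials of degree `n - r` whose distance is
at least `n - r - d`. -/
theorem stmt6 (k d r : ℕ) (F : Type) [Field F] [Fintype F] [DecidableEq F]
    (hcard : Fintype.card F = 2 ^ k) (hd1 : 1 ≤ d) (hdn : d + r < 2 ^ k)
    (hr : 0 < r) (hrd : r + 1 < d) (π : F ≃ Fin (2 ^ k))
    (S : Finset F) (hS : S.card = r) (j₁ j₂ : S → F) (hne : j₁ ≠ j₂) :
    letI lo : LinearOrder ((F × F) →₀ ℕ) := lexMonOrder π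
    let u := leadMon lo
      (derivMon (∑ i ∈ S.attach, Finsupp.single ((i : F), j₁ i) 1) (NW F d))
    let v := leadMon lo
      (derivMon (∑ i ∈ S.attach, Finsupp.single ((i : F), j₂ i) 1) (NW F d))
    (∀ x, u x ≤ 1) ∧ (∀ x, v x ≤ 1) ∧
    (u.sum fun _ c => c) = 2 ^ k - r ∧ (v.sum fun _ c => c) = 2 ^ k - r ∧
    2 ^ k - r - d ≤ u.support.card - (u.support ∩ v.support).card :=
  stmt6_general k d r F hcard hdn hrd π S hS j₁ j₂ hne
end

section
/- Let α and β be two distinct multilinear monomials of equal degree in the variables x_1, …, x_N whose distance is Δ, and let ℓ, m be positive integers with m ≥ Δ. Let S_α (respectively S_β) be the set of all monomials of the form α·γ (respectively β·γ) where γ ranges over monomials of degree ℓ and support exactly m. Then |S_α ∩ S_β| ≤ C(N−Δ, m−Δ)·C(ℓ−1, m−1), where C(a,b) denotes the binomial coefficient. -/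
lemma monDeg_eq_card {σ : Type*} (e : σ →₀ ℕ) (h : ∀ x, e x ≤ 1) :
    monDeg e = e.support.card := by
  rw [monDeg, Finsupp.sum]
  rw [Finset.sum_congr rfl (fun x hx => ?_), Finset.sum_const, smul_eq_mul, mul_one]
  have h1 := h x
  have h2 := Finsupp.mem_support_iff.1 hx
  omega

lemma card_sym_le {α : Type*} [DecidableEq α] (s : Finset α) (k : ℕ) :
    (s.sym k).card ≤ (s.card + k - 1).choose k := by
  classical
  have hsub : s.sym k ⊆ Finset.univ.image
      (Sym.map (Subtype.val : {x // x ∈ s} → α) : Sym {x // x ∈ s} k → Sym α k) := by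
    intro z hz
    rw [Finset.mem_sym_iff] at hz
    refine Finset.mem_image.2 ⟨z.attach.map fun x => (⟨x.1, hz _ x.2⟩ : {a // a ∈ s}),
      Finset.mem_univ _, ?_⟩
    rw [Sym.map_map]
    exact z.attach_map_coe
  calc (s.sym k).card ≤ _ := Finset.card_le_card hsub
    _ ≤ (Finset.univ : Finset (Sym {x // x ∈ s} k)).card := Finset.card_image_le
    _ = Fintype.card (Sym {x // x ∈ s} k) := Finset.card_univ
    _ = Nat.multichoose (Fintype.card {x // x ∈ s}) k := Sym.card_sym_eq_multichoose _ _
    _ = (s.card + k - 1).choose k := by rw [Fintype.card_coe, Nat.multichoose_eq]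

lemma card_piAntidiag_le {α : Type*} [DecidableEq α] (s : Finset α) (k : ℕ) :
    (Finset.piAntidiag s k).card ≤ (s.card + k - 1).choose k := by
  rw [← Finset.map_sym_eq_piAntidiag, Finset.card_map]
  exact card_sym_le s k

/-- Let `α, β` be distinct multilinear monomials of equal degree in
`N` variables at distance `Δ`, and `ℓ, m` positive integers with `m ≥ Δ`. Let `S_α`
(resp. `S_β`) be the set of monomials `α·γ` (resp. `β·γ`) with `γ` of degree `ℓ` and
support exactly `m`. Then `|S_α ∩ S_β| ≤ C(N-Δ, m-Δ)·C(ℓ-1, m-1)`. -/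
theorem stmt7 (N ℓ m Δ : ℕ) (hℓ : 0 < ℓ) (hm : 0 < m) (hΔ : 0 < Δ) (hΔm : Δ ≤ m)
    (α β : Fin N →₀ ℕ) (hne : α ≠ β)
    (hαml : ∀ x, α x ≤ 1) (hβml : ∀ x, β x ≤ 1)
    (hdeg : monDeg α = monDeg β)
    (hdist : α.support.card - (α.support ∩ β.support).card = Δ) :
    ({u | ∃ γ : Fin N →₀ ℕ, monDeg γ = ℓ ∧ γ.support.card = m ∧ u = α + γ} ∩
        {u | ∃ γ : Fin N →₀ ℕ, monDeg γ = ℓ ∧ γ.support.card = m ∧ u = β + γ}).ncard ≤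
      (N - Δ).choose (m - Δ) * (ℓ - 1).choose (m - 1) := by
  classical
  set B : Finset (Fin N) := β.support \ α.support with hBdef
  -- |B| = Δ
  have hcard : α.support.card = β.support.card := by
    rw [← monDeg_eq_card α hαml, ← monDeg_eq_card β hβml, hdeg]
  have hBcard : B.card = Δ := by
    have h1 := Finset.card_inter_add_card_sdiff β.support α.support
    have h2 : (β.support ∩ α.support) = (α.support ∩ β.support) := Finset.inter_comm _ _
    have h3 : (α.support ∩ β.support).card ≤ α.support.card :=
      Finset.card_le_card Finset.inter_subset_left
    rw [h2] at h1
    have hBc : B.card = (β.support \ α.support).card := rfl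
    omega
  -- the collecting finset
  set F : Finset (Fin N →₀ ℕ) :=
    ((Finset.univ \ B).powersetCard (m - Δ)).biUnion
      (fun T' => (Finset.finsuppAntidiag (T' ∪ B) ℓ).filter
        (fun γ => γ.support = T' ∪ B)) with hFdef
  have hsub : ({u | ∃ γ : Fin N →₀ ℕ, monDeg γ = ℓ ∧ γ.support.card = m ∧ u = α + γ} ∩
        {u | ∃ γ : Fin N →₀ ℕ, monDeg γ = ℓ ∧ γ.support.card = m ∧ u = β + γ}) ⊆
      ↑(F.image (fun γ => α + γ)) := by
    rintro u ⟨⟨γ, hγdeg, hγcard, rfl⟩, ⟨γ', hdeg', hcard', heq⟩⟩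
    have hBsupp : B ⊆ γ.support := by
      intro x hx
      have hxβ : x ∈ β.support := (Finset.mem_sdiff.1 hx).1
      have hxα : x ∉ α.support := (Finset.mem_sdiff.1 hx).2
      have h1 : β x ≠ 0 := Finsupp.mem_support_iff.1 hxβ
      have h2 : α x = 0 := Finsupp.notMem_support_iff.1 hxα
      have h3 : α x + γ x = β x + γ' x := by
        have := congrFun (congrArg (⇑) heq) x
        simpa using this
      exact Finsupp.mem_support_iff.2 (by omega)
    refine Finset.mem_coe.2 (Finset.mem_image.2 ⟨γ, ?_, rfl⟩)
    refine Finset.mem_biUnion.2 ⟨γ.support \ B, ?_, ?_⟩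
    · refine Finset.mem_powersetCard.2 ⟨Finset.sdiff_subset_sdiff (Finset.subset_univ _)
        (le_refl _), ?_⟩
      rw [Finset.card_sdiff_of_subset hBsupp, hγcard, hBcard]
    · have hu : γ.support \ B ∪ B = γ.support := Finset.sdiff_union_of_subset hBsupp
      rw [Finset.mem_filter, hu]
      refine ⟨Finset.mem_finsuppAntidiag.2 ⟨?_, le_refl _⟩, rfl⟩
      rw [← hγdeg, monDeg, Finsupp.sum]
  -- cardinality bound for F
  have hFcard : F.card ≤ (N - Δ).choose (m - Δ) * (ℓ - 1).choose (m - 1) := by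
    have hb : ∀ T' ∈ (Finset.univ \ B).powersetCard (m - Δ),
        ((Finset.finsuppAntidiag (T' ∪ B) ℓ).filter
          (fun γ => γ.support = T' ∪ B)).card ≤ (ℓ - 1).choose (m - 1) := by
      intro T' hT'
      obtain ⟨hT'sub, hT'card⟩ := Finset.mem_powersetCard.1 hT'
      have hdisj : Disjoint T' B := by
        intro s hs1 hs2
        intro x hx
        have := hT'sub (hs1 hx)
        have := hs2 hx
        simp only [Finset.mem_sdiff] at *
        tauto
      have hTcard : (T' ∪ B).card = m := by
        rw [Finset.card_union_of_disjoint hdisj, hT'card, hBcard]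
        omega
      set T := T' ∪ B with hT
      set D := (Finset.finsuppAntidiag T ℓ).filter (fun γ => γ.support = T) with hD
      have hmem : ∀ γ ∈ D, T.sum γ = ℓ ∧ γ.support = T := by
        intro γ hγ
        rw [hD, Finset.mem_filter, Finset.mem_finsuppAntidiag] at hγ
        exact ⟨hγ.1.1, hγ.2⟩
      by_cases hlm : m ≤ ℓ
      · -- inject into piAntidiag T (ℓ - m)
        have hinj : Set.InjOn (fun (γ : Fin N →₀ ℕ) (x : Fin N) =>
            if x ∈ T then γ x - 1 else 0) ↑D := by
          intro γ1 h1 γ2 h2 hfe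
          obtain ⟨_, hs1⟩ := hmem γ1 h1
          obtain ⟨_, hs2⟩ := hmem γ2 h2
          ext x
          have hx := congrFun hfe x
          by_cases hxT : x ∈ T
          · simp only [hxT, if_true] at hx
            have e1 : γ1 x ≠ 0 := Finsupp.mem_support_iff.1 (hs1 ▸ hxT)
            have e2 : γ2 x ≠ 0 := Finsupp.mem_support_iff.1 (hs2 ▸ hxT)
            omega
          · have e1 : γ1 x = 0 := Finsupp.notMem_support_iff.1 (fun h => hxT (hs1 ▸ h))
            have e2 : γ2 x = 0 := Finsupp.notMem_support_iff.1 (fun h => hxT (hs2 ▸ h))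
            rw [e1, e2]
        have hmaps : ∀ γ ∈ D, (fun (x : Fin N) => if x ∈ T then γ x - 1 else 0) ∈
            Finset.piAntidiag T (ℓ - m) := by
          intro γ hγ
          obtain ⟨hsum, hsupp⟩ := hmem γ hγ
          refine Finset.mem_piAntidiag.2 ⟨?_, ?_⟩
          · have hpos : ∀ x ∈ T, 1 ≤ γ x := fun x hx =>
              Nat.one_le_iff_ne_zero.2 (Finsupp.mem_support_iff.1 (hsupp ▸ hx))
            calc (∑ x ∈ T, if x ∈ T then γ x - 1 else 0)
                = ∑ x ∈ T, (γ x - 1) := Finset.sum_congr rfl (fun x hx => by simp [hx])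
              _ = (∑ x ∈ T, γ x) - ∑ x ∈ T, 1 := Finset.sum_tsub_distrib T hpos
              _ = ℓ - m := by rw [hsum, Finset.sum_const, smul_eq_mul, mul_one, hTcard]
          · intro i hi
            by_contra hiT
            simp [hiT] at hi
        calc D.card ≤ (Finset.piAntidiag T (ℓ - m)).card :=
              Finset.card_le_card_of_injOn _ hmaps hinj
          _ ≤ (T.card + (ℓ - m) - 1).choose (ℓ - m) := card_piAntidiag_le T (ℓ - m)
          _ = (ℓ - 1).choose (ℓ - m) := by rw [hTcard]; congr 1; omega
          _ = (ℓ - 1).choose (m - 1) := by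
              have : m - 1 ≤ ℓ - 1 := by omega
              have h := Nat.choose_symm this
              have he : ℓ - 1 - (m - 1) = ℓ - m := by omega
              rw [he] at h
              exact h
      · -- D is empty
        have : D = ∅ := by
          rw [Finset.eq_empty_iff_forall_notMem]
          intro γ hγ
          obtain ⟨hsum, hsupp⟩ := hmem γ hγ
          have hpos : ∀ x ∈ T, 1 ≤ γ x := fun x hx =>
            Nat.one_le_iff_ne_zero.2 (Finsupp.mem_support_iff.1 (hsupp ▸ hx))
          have : m ≤ ℓ := by
            calc m = ∑ _x ∈ T, 1 := by
                  rw [Finset.sum_const, smul_eq_mul, mul_one, hTcard]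
              _ ≤ ∑ x ∈ T, γ x := Finset.sum_le_sum hpos
              _ = ℓ := hsum
          omega
        simp [this]
    calc F.card ≤ ((Finset.univ \ B).powersetCard (m - Δ)).card * (ℓ - 1).choose (m - 1) :=
          Finset.card_biUnion_le_card_mul _ _ _ hb
      _ = (N - Δ).choose (m - Δ) * (ℓ - 1).choose (m - 1) := by
          rw [Finset.card_powersetCard, Finset.card_sdiff_of_subset (Finset.subset_univ _),
            Finset.card_univ, Fintype.card_fin, hBcard]
  calc _ ≤ (↑(F.image (fun γ => α + γ)) : Set (Fin N →₀ ℕ)).ncard :=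
        Set.ncard_le_ncard hsub (Finset.finite_toSet _)
    _ = (F.image (fun γ => α + γ)).card := Set.ncard_coe_finset _
    _ ≤ F.card := Finset.card_image_le
    _ ≤ _ := hFcard
end
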